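/- Let ρ > 1, s ∈ (0,1), λ > 0, and define A_k^ρ(η) := exp(λ·Π_ρ(⟨k,η⟩)) where Π_ρ(r) = ∫₀^r max(s·x^{s−1} − s·ρ^{s−1}, 0) dx and ⟨k,η⟩ = (1+k²+η²)^{1/2}. Then there exists C = C(λ,s), independent of ρ, such that A_k^ρ(α+β) ≤ C · A_k^ρ(α) · e^{λ⟨β⟩^s} for all α, β ∈ ℝ and all integers k. -/

import Mathlib

/-!
Since `0 ≤ h_ρ(x) ≤ s x^(s-1)` for `x > 0`, the primitive `Π_ρ` is nondecreasing and grows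
no faster than `x ↦ x^s`. Together with `⟨k, α + β⟩ ≤ ⟨k, α⟩ + ⟨β⟩` and the subadditivity of
`x ↦ x^s` this gives `Π_ρ ⟨k, α + β⟩ ≤ Π_ρ ⟨k, α⟩ + ⟨β⟩^s` uniformly in `ρ`, so `C = 1` works.
-/

noncomputable def hWeight (s ρ x : ℝ) : ℝ :=
  if x ≤ ρ then s * x ^ (s - 1) - s * ρ ^ (s - 1) else 0

noncomputable def PiWeight (s ρ r : ℝ) : ℝ := ∫ x in (0 : ℝ)..r, hWeight s ρ x

noncomputable def jap (k : ℤ) (η : ℝ) : ℝ := Real.sqrt (1 + (k : ℝ) ^ 2 + η ^ 2)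

noncomputable def japR (β : ℝ) : ℝ := Real.sqrt (1 + β ^ 2)

noncomputable def Aweight (s ρ lam : ℝ) (k : ℤ) (η : ℝ) : ℝ :=
  Real.exp (lam * PiWeight s ρ (jap k η))

open Set MeasureTheory

lemma sqrt_add_sq_le_sqrt_add_sq_add_abs {c : ℝ} (hc : 0 ≤ c) (x y : ℝ) :
    √(c + (x + y) ^ 2) ≤ √(c + x ^ 2) + |y| := by
  have hx : |x| ≤ √(c + x ^ 2) := Real.abs_le_sqrt (by linarith)
  have hsq : √(c + x ^ 2) ^ 2 = c + x ^ 2 := Real.sq_sqrt (by positivity)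
  rw [Real.sqrt_le_left (by positivity)]
  have hxy : x * y ≤ √(c + x ^ 2) * |y| :=
    (le_abs_self _).trans ((abs_mul x y).trans_le (mul_le_mul_of_nonneg_right hx (abs_nonneg y)))
  nlinarith [sq_abs y]

lemma abs_le_japR (β : ℝ) : |β| ≤ japR β :=
  Real.abs_le_sqrt (by linarith)

lemma jap_pos (k : ℤ) (η : ℝ) : 0 < jap k η :=
  Real.sqrt_pos.mpr (by positivity)

lemma jap_add_le (k : ℤ) (α β : ℝ) : jap k (α + β) ≤ jap k α + japR β :=
  (sqrt_add_sq_le_sqrt_add_sq_add_abs (by positivity) α β).trans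
    (by unfold jap; gcongr; exact abs_le_japR β)

section hWeight

variable {s ρ : ℝ}

lemma hWeight_eq_indicator :
    hWeight s ρ = (Iic ρ).indicator fun x => s * x ^ (s - 1) - s * ρ ^ (s - 1) := by
  ext x
  simp [hWeight, indicator]

lemma intervalIntegrable_const_mul_rpow_sub_one (hs : 0 < s) (a b : ℝ) :
    IntervalIntegrable (fun x : ℝ => s * x ^ (s - 1)) volume a b :=
  (intervalIntegral.intervalIntegrable_rpow' (by linarith)).const_mul s

lemma hWeight_intervalIntegrable (hs : 0 < s) (a b : ℝ) :
    IntervalIntegrable (hWeight s ρ) volume a b := by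
  have hg := (intervalIntegrable_const_mul_rpow_sub_one hs a b).sub
    (intervalIntegrable_const (c := s * ρ ^ (s - 1)))
  rw [hWeight_eq_indicator]
  rw [intervalIntegrable_iff] at hg ⊢
  exact hg.indicator measurableSet_Iic

lemma hWeight_nonneg (hs : 0 ≤ s) (hs1 : s ≤ 1) {x : ℝ} (hx : 0 < x) : 0 ≤ hWeight s ρ x := by
  unfold hWeight
  split_ifs with hxρ
  · have : ρ ^ (s - 1) ≤ x ^ (s - 1) := Real.rpow_le_rpow_of_nonpos hx hxρ (by linarith)
    nlinarith
  · rfl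

lemma hWeight_le (hs : 0 ≤ s) (hρ : 0 < ρ) {x : ℝ} (hx : 0 ≤ x) :
    hWeight s ρ x ≤ s * x ^ (s - 1) := by
  unfold hWeight
  split_ifs
  · nlinarith [Real.rpow_pos_of_pos hρ (s - 1)]
  · exact mul_nonneg hs (Real.rpow_nonneg hx _)

lemma PiWeight_sub_PiWeight (hs : 0 < s) (a b : ℝ) :
    PiWeight s ρ b - PiWeight s ρ a = ∫ x in a..b, hWeight s ρ x := by
  rw [PiWeight, PiWeight, sub_eq_iff_eq_add',
    intervalIntegral.integral_add_adjacent_intervals (hWeight_intervalIntegrable hs 0 a)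
      (hWeight_intervalIntegrable hs a b)]

lemma PiWeight_mono (hs : 0 < s) (hs1 : s ≤ 1) {a b : ℝ} (ha : 0 < a) (hab : a ≤ b) :
    PiWeight s ρ a ≤ PiWeight s ρ b := by
  rw [← sub_nonneg, PiWeight_sub_PiWeight hs]
  exact intervalIntegral.integral_nonneg hab fun x hx =>
    hWeight_nonneg hs.le hs1 (ha.trans_le hx.1)

lemma PiWeight_sub_PiWeight_le_rpow_sub_rpow (hs : 0 < s) (hρ : 0 < ρ) {a b : ℝ} (ha : 0 ≤ a)
    (hab : a ≤ b) : PiWeight s ρ b - PiWeight s ρ a ≤ b ^ s - a ^ s := by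
  have hint : ∫ x in a..b, s * x ^ (s - 1) = b ^ s - a ^ s := by
    rw [intervalIntegral.integral_const_mul, integral_rpow (Or.inl (by linarith)), sub_add_cancel]
    field_simp
  rw [PiWeight_sub_PiWeight hs, ← hint]
  exact intervalIntegral.integral_mono_on hab (hWeight_intervalIntegrable hs a b)
    (intervalIntegrable_const_mul_rpow_sub_one hs a b) fun x hx => hWeight_le hs.le hρ (ha.trans hx.1)

lemma PiWeight_le_add_of_rpow_le_add (hs : 0 < s) (hs1 : s ≤ 1) (hρ : 0 < ρ) {a b t : ℝ}
    (ha : 0 < a) (hb : 0 < b) (ht : 0 ≤ t) (hba : b ^ s ≤ a ^ s + t) :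
    PiWeight s ρ b ≤ PiWeight s ρ a + t := by
  rcases le_total b a with hb_le | ha_le
  · linarith [PiWeight_mono (ρ := ρ) hs hs1 hb hb_le]
  · linarith [PiWeight_sub_PiWeight_le_rpow_sub_rpow hs hρ ha.le ha_le]

end hWeight

theorem Aweight_submultiplicative (s lam : ℝ) (hs : s ∈ Set.Ioo (0 : ℝ) 1) (hlam : 0 < lam) :
    ∃ C > (0 : ℝ), ∀ ρ : ℝ, 1 < ρ → ∀ (k : ℤ) (α β : ℝ),
      Aweight s ρ lam k (α + β) ≤ C * Aweight s ρ lam k α * Real.exp (lam * japR β ^ s) := by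
  refine ⟨1, one_pos, fun ρ hρ k α β => ?_⟩
  have hβ : 0 ≤ japR β := (abs_nonneg β).trans (abs_le_japR β)
  have hrpow : jap k (α + β) ^ s ≤ jap k α ^ s + japR β ^ s :=
    (Real.rpow_le_rpow (jap_pos k _).le (jap_add_le k α β) hs.1.le).trans
      (Real.rpow_add_le_add_rpow (jap_pos k α).le hβ hs.1.le hs.2.le)
  have hPi := PiWeight_le_add_of_rpow_le_add (ρ := ρ) hs.1 hs.2.le (by linarith) (jap_pos k α)
    (jap_pos k _) (Real.rpow_nonneg hβ s) hrpow
  rw [one_mul, Aweight, Aweight, ← Real.exp_add, Real.exp_le_exp, ← mul_add]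
  exact mul_le_mul_of_nonneg_left hPi hlam.le
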